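/- arXiv:2002.08635 — 3 statements merged into one kernel-verified Lean document; each statement's English description precedes it below -/
import Mathlib

section
/- Let H be a Hilbert space, Θ ⊂ H closed convex, ū ∈ Θ, û* ∈ N(ū;Θ), and let N_Θ : H ⇉ H denote the normal cone mapping u ↦ N(u;Θ). Then the domain of the regular coderivative satisfies dom \widehat{D}*N_Θ(ū,û*) ⊂ −( T(ū;Θ) ∩ {û*}^⊥ ), i.e., if \widehat{D}*N_Θ(ū,û*)(w) ≠ ∅ then −w ∈ T(ū;Θ) ∩ {û*}^⊥. -/
open RealInnerProductSpace

/-- Radial cone to a set `Θ` at `u₀`. -/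
def radialCone {H : Type*} [NormedAddCommGroup H] [InnerProductSpace ℝ H]
    (Θ : Set H) (u₀ : H) : Set H :=
  {v : H | ∃ t : ℝ, 0 < t ∧ ∃ w ∈ Θ, v = t⁻¹ • (w - u₀)}

/-- Tangent cone: closure of the radial cone. -/
def tangentCone' {H : Type*} [NormedAddCommGroup H] [InnerProductSpace ℝ H]
    (Θ : Set H) (u₀ : H) : Set H := closure (radialCone Θ u₀)

/-- Normal cone of convex analysis (empty outside the set). -/
def normalCone' {H : Type*} [NormedAddCommGroup H] [InnerProductSpace ℝ H]
    (Θ : Set H) (u₀ : H) : Set H :=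
  {u' : H | u₀ ∈ Θ ∧ ∀ u ∈ Θ, ⟪u', u - u₀⟫ ≤ 0}

/-- Orthogonal complement of a single vector. -/
def perp {H : Type*} [NormedAddCommGroup H] [InnerProductSpace ℝ H] (u' : H) : Set H :=
  {v : H | ⟪u', v⟫ = 0}

/-- Regular (Fréchet) coderivative of a set-valued map, via the regular normal cone
to its graph (sum norm on the product). -/
def regCoderivMem {H : Type*} [NormedAddCommGroup H] [InnerProductSpace ℝ H]
    (T : H → Set H) (u u' : H) (w v : H) : Prop :=
  ∀ ε : ℝ, 0 < ε → ∃ δ : ℝ, 0 < δ ∧ ∀ x x', x' ∈ T x →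
    ‖x - u‖ + ‖x' - u'‖ ≤ δ →
    ⟪v, x - u⟫ - ⟪w, x' - u'⟫ ≤ ε * (‖x - u‖ + ‖x' - u'‖)

/-!
Test the regular normal inequality of the graph of `N_Θ` only at the graph points
`(ū, û* + t z)`, `t ↓ 0`: whenever `û* + t z ∈ N(ū; Θ)` for small `t > 0`, it yields
`⟪w, z⟫ ≥ 0`. This applies to every `z ∈ N(ū; Θ)`, since the normal cone is a convex cone, and
to `z = -û*`. Hence `-w` lies in the polar of `N(ū; Θ)`, which is `T(ū; Θ)` by the bipolar
theorem (Farkas), and `⟪w, û*⟫ = 0`.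
-/

open Filter Topology

section ConvexAnalysis
variable {H : Type*} [NormedAddCommGroup H] [InnerProductSpace ℝ H] {Θ : Set H} {u₀ : H}

lemma add_mem_normalCone' {a b : H} (ha : a ∈ normalCone' Θ u₀) (hb : b ∈ normalCone' Θ u₀) :
    a + b ∈ normalCone' Θ u₀ :=
  ⟨ha.1, fun u hu => by rw [inner_add_left]; exact add_nonpos (ha.2 u hu) (hb.2 u hu)⟩

lemma smul_mem_normalCone' {a : H} {c : ℝ} (hc : 0 ≤ c) (ha : a ∈ normalCone' Θ u₀) :
    c • a ∈ normalCone' Θ u₀ :=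
  ⟨ha.1, fun u hu => by
    rw [real_inner_smul_left]; exact mul_nonpos_of_nonneg_of_nonpos hc (ha.2 u hu)⟩

lemma sub_mem_radialCone {u : H} (hu : u ∈ Θ) : u - u₀ ∈ radialCone Θ u₀ :=
  ⟨1, one_pos, u, hu, by rw [inv_one, one_smul]⟩

def radialConvexCone (hcv : Convex ℝ Θ) (u₀ : H) : ConvexCone ℝ H where
  carrier := radialCone Θ u₀
  smul_mem' := by
    rintro c hc v ⟨t, ht, u, hu, rfl⟩
    exact ⟨t / c, div_pos ht hc, u, hu, by rw [smul_smul]; congr 1; field_simp⟩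
  add_mem' := by
    rintro v₁ ⟨t, ht, u₁, hu₁, rfl⟩ v₂ ⟨s, hs, u₂, hu₂, rfl⟩
    have hts : 0 < t⁻¹ + s⁻¹ := by positivity
    -- `t⁻¹ (u₁ - u₀) + s⁻¹ (u₂ - u₀)` rescales the convex combination of `u₁, u₂`
    -- with weights proportional to `t⁻¹, s⁻¹`.
    refine ⟨(t⁻¹ + s⁻¹)⁻¹, inv_pos.2 hts,
      (t⁻¹ / (t⁻¹ + s⁻¹)) • u₁ + (s⁻¹ / (t⁻¹ + s⁻¹)) • u₂,
      hcv hu₁ hu₂ (by positivity) (by positivity) (by field_simp), ?_⟩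
    rw [inv_inv]
    match_scalars <;> field_simp
    ring

def tangentProperCone (hcv : Convex ℝ Θ) (hu₀ : u₀ ∈ Θ) : ProperCone ℝ H :=
  ⟨((radialConvexCone hcv u₀).toPointedCone
      (show (0 : H) ∈ radialCone Θ u₀ from sub_self u₀ ▸ sub_mem_radialCone hu₀)).closure,
    isClosed_closure⟩

lemma coe_tangentProperCone (hcv : Convex ℝ Θ) (hu₀ : u₀ ∈ Θ) :
    (tangentProperCone hcv hu₀ : Set H) = tangentCone' Θ u₀ :=
  rfl

lemma mem_tangentCone'_of_forall_inner_nonpos [CompleteSpace H] (hcv : Convex ℝ Θ)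
    (hu₀ : u₀ ∈ Θ) {x : H} (hx : ∀ y ∈ normalCone' Θ u₀, ⟪y, x⟫ ≤ 0) :
    x ∈ tangentCone' Θ u₀ := by
  rw [← coe_tangentProperCone hcv hu₀]
  by_contra hxT
  obtain ⟨y, hyT, hxy⟩ := (tangentProperCone hcv hu₀).hyperplane_separation' hxT
  have hyN : -y ∈ normalCone' Θ u₀ := ⟨hu₀, fun u hu => by
    have := hyT (u - u₀) (subset_closure (sub_mem_radialCone hu))
    rw [inner_neg_left, real_inner_comm]
    linarith⟩
  have := hx (-y) hyN
  rw [inner_neg_left, real_inner_comm] at this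
  linarith

end ConvexAnalysis

lemma inner_nonneg_of_regCoderivMem {H : Type*} [NormedAddCommGroup H] [InnerProductSpace ℝ H]
    {T : H → Set H} {u₀ n₀ w v z : H} (hv : regCoderivMem T u₀ n₀ w v)
    (hz : ∀ᶠ t in 𝓝[>] (0 : ℝ), n₀ + t • z ∈ T u₀) :
    0 ≤ ⟪w, z⟫ := by
  have hlin : Tendsto (fun t : ℝ => t * ‖z‖) (𝓝[>] 0) (𝓝 0) :=
    ((continuous_mul_const ‖z‖).tendsto' 0 0 (zero_mul _)).mono_left nhdsWithin_le_nhds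
  have hbound : ∀ ε > 0, -⟪w, z⟫ ≤ ε * ‖z‖ := by
    intro ε hε
    obtain ⟨δ, hδ, hineq⟩ := hv ε hε
    obtain ⟨t, ⟨hzt, htδ⟩, ht⟩ :=
      ((hz.and (hlin.eventually (ge_mem_nhds hδ))).and self_mem_nhdsWithin).exists
    have ht : 0 < t := ht
    have := hineq u₀ (n₀ + t • z) hzt (by simpa [norm_smul, abs_of_pos ht] using htδ)
    simp only [sub_self, inner_zero_right, add_sub_cancel_left, norm_zero, zero_add, zero_sub,
      norm_smul, Real.norm_eq_abs, abs_of_pos ht, real_inner_smul_right] at this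
    rw [← mul_neg, mul_left_comm] at this
    exact le_of_mul_le_mul_left this ht
  exact neg_nonpos.mp (ge_of_tendsto hlin (eventually_nhdsWithin_of_forall hbound))

theorem stmt14_general {H : Type*} [NormedAddCommGroup H] [InnerProductSpace ℝ H]
    [CompleteSpace H] (Θ : Set H) (hcv : Convex ℝ Θ)
    (u₀ : H) (n₀ : H) (hn₀ : n₀ ∈ normalCone' Θ u₀)
    (w : H) (hw : ∃ v, regCoderivMem (normalCone' Θ) u₀ n₀ w v) :
    -w ∈ tangentCone' Θ u₀ ∩ perp n₀ := by
  obtain ⟨v, hv⟩ := hw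
  have hnormal : ∀ y ∈ normalCone' Θ u₀, 0 ≤ ⟪w, y⟫ := fun y hy =>
    inner_nonneg_of_regCoderivMem hv <| eventually_nhdsWithin_of_forall fun t ht =>
      add_mem_normalCone' hn₀ (smul_mem_normalCone' (le_of_lt ht) hy)
  have hshrink : 0 ≤ ⟪w, -n₀⟫ :=
    inner_nonneg_of_regCoderivMem hv <| eventually_of_mem (Ioo_mem_nhdsGT one_pos) fun t ht => by
      rw [show n₀ + t • -n₀ = (1 - t) • n₀ by module]
      exact smul_mem_normalCone' (by linarith [ht.2]) hn₀
  rw [inner_neg_right] at hshrink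
  refine ⟨mem_tangentCone'_of_forall_inner_nonpos hcv hn₀.1 fun y hy => ?_, ?_⟩
  · rw [inner_neg_right, real_inner_comm]
    linarith [hnormal y hy]
  · show ⟪n₀, -w⟫ = 0
    rw [inner_neg_right, real_inner_comm]
    linarith [hnormal n₀ hn₀]

theorem stmt14 {H : Type*} [NormedAddCommGroup H] [InnerProductSpace ℝ H]
    [CompleteSpace H] (Θ : Set H) (hcl : IsClosed Θ) (hcv : Convex ℝ Θ)
    (u₀ : H) (hu₀ : u₀ ∈ Θ) (n₀ : H) (hn₀ : n₀ ∈ normalCone' Θ u₀)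
    (w : H) (hw : ∃ v, regCoderivMem (normalCone' Θ) u₀ n₀ w v) :
    -w ∈ tangentCone' Θ u₀ ∩ perp n₀ :=
  stmt14_general Θ hcv u₀ n₀ hn₀ w hw
end

section
/- Let H be a Hilbert space, Θ ⊂ H closed convex, ū ∈ Θ, û* ∈ N(ū;Θ), and suppose Θ is polyhedric at ū for û*. Then for every w ∈ −( T(ū;Θ) ∩ {û*}^⊥ ), the regular coderivative of the normal cone mapping satisfies \widehat{D}*N_Θ(ū,û*)(w) = ( T(ū;Θ) ∩ {û*}^⊥ )*, the polar cone of the critical cone; in particular 0 ∈ \widehat{D}*N_Θ(ū,û*)(w). -/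
open RealInnerProductSpace

/-- Polar cone. -/
def polarCone {H : Type*} [NormedAddCommGroup H] [InnerProductSpace ℝ H]
    (C : Set H) : Set H := {u' : H | ∀ v ∈ C, ⟪u', v⟫ ≤ 0}

/-!
Write `K = T(ū;Θ) ∩ {û*}^⊥`. If `v ∈ D̂*N_Θ(ū,û*)(w)`, test the defining inequality along
`(ū + s y, û*)` for a radial direction `y ⊥ û*`: `û*` stays normal there, so `⟪v, y⟫ ≤ 0`;
by polyhedricity such `y` are dense in `K`, hence `v ∈ K*`.

Conversely, the bipolar theorem gives `K* = cl(N(ū;Θ) + ℝ û*)`, and polyhedricity makes `-w`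
a limit of radial directions `z ⊥ û*`. For `ν ∈ N(ū;Θ)` the pair `(-z, ν + l û*)` satisfies the
coderivative inequality up to an error `C ‖x - ū‖ ‖x* - û*‖` on the graph, which is quadratic,
so it is a regular normal; regular normals form a closed convex cone, and the claim follows
by approximation.
-/

open Filter Topology
open scoped Pointwise

section PolarCone

variable {H : Type*} [NormedAddCommGroup H] [InnerProductSpace ℝ H]

lemma polarCone_anti {s t : Set H} (hst : s ⊆ t) : polarCone t ⊆ polarCone s :=
  fun _ hu v hv => hu v (hst hv)

lemma polarCone_closure (s : Set H) : polarCone (closure s) = polarCone s := by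
  refine (polarCone_anti subset_closure).antisymm fun u hu v hv => ?_
  exact closure_minimal (t := {v | ⟪u, v⟫ ≤ 0}) hu
    (isClosed_le (continuous_const.inner continuous_id) continuous_const) hv

def polarPointedCone (s : Set H) : PointedCone ℝ H where
  carrier := polarCone s
  zero_mem' v _ := by simp
  add_mem' {a b} ha hb v hv := by
    rw [inner_add_left]
    linarith [ha v hv, hb v hv]
  smul_mem' c u hu v hv := by
    change ⟪(c : ℝ) • u, v⟫ ≤ 0
    rw [real_inner_smul_left]
    exact mul_nonpos_of_nonneg_of_nonpos c.2 (hu v hv)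

@[simp]
lemma coe_polarPointedCone (s : Set H) : (polarPointedCone s : Set H) = polarCone s := rfl

lemma polarCone_polarCone_subset_closure [CompleteSpace H] (C : PointedCone ℝ H) :
    polarCone (polarCone (C : Set H)) ⊆ closure C := by
  intro u hu
  by_contra hu'
  obtain ⟨y, hy, hyu⟩ :=
    ProperCone.hyperplane_separation' ⟨C.closure, isClosed_closure⟩ (x₀ := u) hu'
  have hy' : -y ∈ polarCone (C : Set H) := fun c hc => by
    rw [inner_neg_left, real_inner_comm, neg_nonpos]
    exact hy c (subset_closure hc)
  have := hu (-y) hy'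
  rw [inner_neg_right] at this
  linarith [real_inner_comm u y]

end PolarCone

section RadialCone

variable {H : Type*} [NormedAddCommGroup H] [InnerProductSpace ℝ H] {Θ : Set H} {u₀ : H}

lemma mem_radialCone_iff {v : H} : v ∈ radialCone Θ u₀ ↔ ∃ t : ℝ, 0 < t ∧ u₀ + t • v ∈ Θ := by
  constructor
  · rintro ⟨t, ht, w, hw, rfl⟩
    refine ⟨t, ht, ?_⟩
    rwa [smul_smul, mul_inv_cancel₀ ht.ne', one_smul, add_sub_cancel]
  · rintro ⟨t, ht, hw⟩
    refine ⟨t, ht, u₀ + t • v, hw, ?_⟩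
    rw [add_sub_cancel_left, smul_smul, inv_mul_cancel₀ ht.ne', one_smul]

lemma eventually_add_smul_mem_of_mem_radialCone (hcv : Convex ℝ Θ) (hu₀ : u₀ ∈ Θ) {v : H}
    (hv : v ∈ radialCone Θ u₀) : ∀ᶠ s in 𝓝[>] (0 : ℝ), u₀ + s • v ∈ Θ := by
  obtain ⟨t, ht, htv⟩ := mem_radialCone_iff.mp hv
  filter_upwards [Ioo_mem_nhdsGT ht] with s hs
  have := hcv.add_smul_mem hu₀ htv ⟨div_nonneg hs.1.le ht.le, (div_le_one ht).mpr hs.2.le⟩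
  rwa [smul_smul, div_mul_cancel₀ _ ht.ne'] at this

lemma zero_mem_radialCone (hu₀ : u₀ ∈ Θ) : (0 : H) ∈ radialCone Θ u₀ :=
  mem_radialCone_iff.mpr ⟨1, one_pos, by simpa using hu₀⟩

def radialPointedCone (hcv : Convex ℝ Θ) (hu₀ : u₀ ∈ Θ) : PointedCone ℝ H where
  carrier := radialCone Θ u₀
  zero_mem' := zero_mem_radialCone hu₀
  add_mem' {a b} ha hb := by
    obtain ⟨s, hsa, hsb, hs⟩ := ((eventually_add_smul_mem_of_mem_radialCone hcv hu₀ ha).and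
      ((eventually_add_smul_mem_of_mem_radialCone hcv hu₀ hb).and self_mem_nhdsWithin)).exists
    refine mem_radialCone_iff.mpr ⟨s / 2, by positivity, ?_⟩
    convert hcv hsa hsb (by norm_num : (0 : ℝ) ≤ 1 / 2) (by norm_num : (0 : ℝ) ≤ 1 / 2)
      (add_halves 1) using 1
    module
  smul_mem' c v hv := by
    obtain ⟨t, ht, htv⟩ := mem_radialCone_iff.mp hv
    change (c : ℝ) • v ∈ radialCone Θ u₀
    rcases c.2.eq_or_lt with hc | hc
    · rw [← hc, zero_smul]
      exact zero_mem_radialCone hu₀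
    · refine mem_radialCone_iff.mpr ⟨t / c, div_pos ht hc, ?_⟩
      rwa [smul_smul, div_mul_cancel₀ _ hc.ne']

@[simp]
lemma coe_radialPointedCone (hcv : Convex ℝ Θ) (hu₀ : u₀ ∈ Θ) :
    (radialPointedCone hcv hu₀ : Set H) = radialCone Θ u₀ := rfl

lemma normalCone'_eq_polarCone_radialCone (hu₀ : u₀ ∈ Θ) :
    normalCone' Θ u₀ = polarCone (radialCone Θ u₀) := by
  ext ν
  refine ⟨fun hν v hv => ?_, fun hν => ⟨hu₀, fun u hu => ?_⟩⟩
  · obtain ⟨t, ht, w, hw, rfl⟩ := hv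
    rw [real_inner_smul_right]
    exact mul_nonpos_of_nonneg_of_nonpos (inv_nonneg.mpr ht.le) (hν.2 w hw)
  · simpa using hν _ ⟨1, one_pos, u, hu, rfl⟩

lemma polarCone_normalCone'_subset_tangentCone' [CompleteSpace H] (hcv : Convex ℝ Θ)
    (hu₀ : u₀ ∈ Θ) : polarCone (normalCone' Θ u₀) ⊆ tangentCone' Θ u₀ := by
  rw [normalCone'_eq_polarCone_radialCone hu₀, ← coe_radialPointedCone hcv hu₀]
  exact polarCone_polarCone_subset_closure _

lemma polarCone_criticalCone_subset_closure [CompleteSpace H] (hcv : Convex ℝ Θ) (hu₀ : u₀ ∈ Θ)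
    (n₀ : H) : polarCone (tangentCone' Θ u₀ ∩ perp n₀) ⊆
      closure (normalCone' Θ u₀ + (ℝ ∙ n₀ : Submodule ℝ H)) := by
  obtain ⟨C, hC⟩ : ∃ C : PointedCone ℝ H,
      (C : Set H) = normalCone' Θ u₀ + (ℝ ∙ n₀ : Submodule ℝ H) := by
    refine ⟨polarPointedCone (radialCone Θ u₀) ⊔ PointedCone.ofSubmodule (ℝ ∙ n₀), ?_⟩
    rw [Submodule.coe_sup, PointedCone.coe_ofSubmodule, coe_polarPointedCone,
      normalCone'_eq_polarCone_radialCone hu₀]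
  have hzero : (0 : H) ∈ normalCone' Θ u₀ := ⟨hu₀, fun _ _ => by simp⟩
  have hpolar : polarCone (C : Set H) ⊆ tangentCone' Θ u₀ ∩ perp n₀ := by
    intro h hh
    rw [hC] at hh
    refine ⟨polarCone_normalCone'_subset_tangentCone' hcv hu₀ fun ν hν => ?_, ?_⟩
    · simpa using hh ν ⟨ν, hν, 0, Submodule.zero_mem _, add_zero ν⟩
    · have h₁ := hh n₀ ⟨0, hzero, n₀, Submodule.mem_span_singleton_self n₀, zero_add n₀⟩
      have h₂ := hh (-n₀)
        ⟨0, hzero, -n₀, Submodule.neg_mem _ (Submodule.mem_span_singleton_self n₀), zero_add _⟩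
      rw [inner_neg_right, neg_nonpos] at h₂
      change ⟪n₀, h⟫ = 0
      rw [real_inner_comm]
      exact le_antisymm h₁ h₂
  rw [← hC]
  exact (polarCone_anti hpolar).trans (polarCone_polarCone_subset_closure C)

end RadialCone

section RegCoderiv

variable {H : Type*} [NormedAddCommGroup H] [InnerProductSpace ℝ H]

lemma regCoderivMem_of_le_mul {T : H → Set H} {u u' w v : H} (C : ℝ) (hC : 0 ≤ C)
    (h : ∀ x x', x' ∈ T x → ⟪v, x - u⟫ - ⟪w, x' - u'⟫ ≤ C * (‖x - u‖ * ‖x' - u'‖)) :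
    regCoderivMem T u u' w v := by
  intro ε hε
  refine ⟨ε / (C + 1), by positivity, fun x x' hx' hnear => (h x x' hx').trans ?_⟩
  have hq : ‖x' - u'‖ ≤ ε / (C + 1) := by linarith [norm_nonneg (x - u)]
  have hCε : C * (ε / (C + 1)) ≤ ε := by
    rw [mul_div_assoc', div_le_iff₀ (by linarith)]
    nlinarith
  calc C * (‖x - u‖ * ‖x' - u'‖) ≤ C * (‖x - u‖ * (ε / (C + 1))) := by gcongr
    _ = C * (ε / (C + 1)) * ‖x - u‖ := by ring
    _ ≤ ε * ‖x - u‖ := by gcongr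
    _ ≤ ε * (‖x - u‖ + ‖x' - u'‖) := by gcongr; linarith [norm_nonneg (x' - u')]

lemma regCoderivMem.add {T : H → Set H} {u u' w₁ v₁ w₂ v₂ : H}
    (h₁ : regCoderivMem T u u' w₁ v₁) (h₂ : regCoderivMem T u u' w₂ v₂) :
    regCoderivMem T u u' (w₁ + w₂) (v₁ + v₂) := by
  intro ε hε
  obtain ⟨δ₁, hδ₁, hb₁⟩ := h₁ (ε / 2) (by positivity)
  obtain ⟨δ₂, hδ₂, hb₂⟩ := h₂ (ε / 2) (by positivity)
  refine ⟨min δ₁ δ₂, lt_min hδ₁ hδ₂, fun x x' hx' hnear => ?_⟩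
  have e₁ := hb₁ x x' hx' (hnear.trans (min_le_left _ _))
  have e₂ := hb₂ x x' hx' (hnear.trans (min_le_right _ _))
  simp only [inner_add_left]
  linarith

lemma regCoderivMem_of_mem_closure {T : H → Set H} {u u' w v : H} {A B : Set H}
    (hw : w ∈ closure A) (hv : v ∈ closure B)
    (hAB : ∀ w' ∈ A, ∀ v' ∈ B, regCoderivMem T u u' w' v') :
    regCoderivMem T u u' w v := by
  intro ε hε
  obtain ⟨w', hw', hww'⟩ := Metric.mem_closure_iff.mp hw (ε / 2) (by positivity)
  obtain ⟨v', hv', hvv'⟩ := Metric.mem_closure_iff.mp hv (ε / 2) (by positivity)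
  obtain ⟨δ, hδ, hb⟩ := hAB w' hw' v' hv' (ε / 2) (by positivity)
  refine ⟨δ, hδ, fun x x' hx' hnear => ?_⟩
  rw [dist_eq_norm] at hww' hvv'
  have e₁ : ⟪v - v', x - u⟫ ≤ ε / 2 * ‖x - u‖ :=
    (real_inner_le_norm _ _).trans (by gcongr)
  have e₂ : ⟪w' - w, x' - u'⟫ ≤ ε / 2 * ‖x' - u'‖ :=
    (real_inner_le_norm _ _).trans (by rw [norm_sub_rev]; gcongr)
  have := hb x x' hx' hnear
  rw [inner_sub_left] at e₁ e₂
  linarith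

lemma inner_nonpos_of_regCoderivMem {T : H → Set H} {u u' w v y : H}
    (hv : regCoderivMem T u u' w v) (hy : ∀ᶠ s in 𝓝[>] (0 : ℝ), u' ∈ T (u + s • y)) :
    ⟪v, y⟫ ≤ 0 := by
  by_contra! hpos
  set ε := ⟪v, y⟫ / (‖y‖ + 1)
  obtain ⟨δ, hδ, hb⟩ := hv ε (by positivity)
  have hsmall : ∀ᶠ s in 𝓝[>] (0 : ℝ), s * ‖y‖ ≤ δ := by
    have : Tendsto (fun s : ℝ => s * ‖y‖) (𝓝[>] 0) (𝓝 0) :=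
      tendsto_nhdsWithin_of_tendsto_nhds ((continuous_mul_const ‖y‖).tendsto' 0 0 (zero_mul _))
    exact this (Iic_mem_nhds hδ)
  obtain ⟨s, hsT, hsδ, hs⟩ := (hy.and (hsmall.and self_mem_nhdsWithin)).exists
  have := hb (u + s • y) u' hsT (by simpa [norm_smul, abs_of_pos hs] using hsδ)
  simp only [add_sub_cancel_left, sub_self, inner_zero_right, sub_zero, add_zero, norm_zero,
    real_inner_smul_right, norm_smul, Real.norm_of_nonneg hs.le] at this
  have hlt : ε * ‖y‖ < ⟪v, y⟫ := by
    rw [div_mul_eq_mul_div, div_lt_iff₀ (by positivity)]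
    nlinarith
  nlinarith

end RegCoderiv

section NormalCone

variable {H : Type*} [NormedAddCommGroup H] [InnerProductSpace ℝ H] {Θ : Set H} {u₀ n₀ : H}

lemma abs_inner_le_of_mem_normalCone' (hn₀ : n₀ ∈ normalCone' Θ u₀) {x x' : H}
    (hx : x' ∈ normalCone' Θ x) : |⟪n₀, x - u₀⟫| ≤ ‖x - u₀‖ * ‖x' - n₀‖ := by
  have hx' : ⟪x', u₀ - x⟫ ≤ 0 := hx.2 u₀ hn₀.1
  have hcs := real_inner_le_norm (x' - n₀) (x - u₀)
  rw [← neg_sub, inner_neg_right] at hx'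
  rw [inner_sub_left, mul_comm] at hcs
  exact abs_le.mpr ⟨by linarith, (hn₀.2 x hx.1).trans (by positivity)⟩

lemma mem_normalCone'_add_smul (hn₀ : n₀ ∈ normalCone' Θ u₀) {y : H} (hy : ⟪n₀, y⟫ = 0)
    {s : ℝ} (hs : u₀ + s • y ∈ Θ) : n₀ ∈ normalCone' Θ (u₀ + s • y) := by
  refine ⟨hs, fun u hu => ?_⟩
  rw [sub_add_eq_sub_sub, inner_sub_right, real_inner_smul_right, hy, mul_zero, sub_zero]
  exact hn₀.2 u hu

lemma regCoderivMem_normalCone'_zero (hn₀ : n₀ ∈ normalCone' Θ u₀) {ν : H}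
    (hν : ν ∈ normalCone' Θ u₀) (l : ℝ) :
    regCoderivMem (normalCone' Θ) u₀ n₀ 0 (ν + l • n₀) := by
  refine regCoderivMem_of_le_mul |l| (abs_nonneg l) fun x x' hx => ?_
  have hν' := hν.2 x hx.1
  have hl : l * ⟪n₀, x - u₀⟫ ≤ |l| * (‖x - u₀‖ * ‖x' - n₀‖) := by
    calc l * ⟪n₀, x - u₀⟫ ≤ |l * ⟪n₀, x - u₀⟫| := le_abs_self _
      _ = |l| * |⟪n₀, x - u₀⟫| := abs_mul _ _
      _ ≤ |l| * (‖x - u₀‖ * ‖x' - n₀‖) := by gcongr; exact abs_inner_le_of_mem_normalCone' hn₀ hx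
  rw [inner_zero_left, sub_zero, inner_add_left, real_inner_smul_left]
  linarith

lemma regCoderivMem_normalCone'_neg (hn₀ : n₀ ∈ normalCone' Θ u₀) {z : H}
    (hz : z ∈ radialCone Θ u₀) (hzn : ⟪n₀, z⟫ = 0) :
    regCoderivMem (normalCone' Θ) u₀ n₀ (-z) 0 := by
  obtain ⟨t, ht, htz⟩ := mem_radialCone_iff.mp hz
  refine regCoderivMem_of_le_mul t⁻¹ (inv_nonneg.mpr ht.le) fun x x' hx => ?_
  have hnormal : t * ⟪x', z⟫ ≤ ⟪x', x - u₀⟫ := by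
    have := hx.2 _ htz
    rw [add_sub_right_comm, inner_add_right, real_inner_smul_right, ← neg_sub, inner_neg_right]
      at this
    linarith
  have hcs := real_inner_le_norm (x' - n₀) (x - u₀)
  rw [inner_sub_left, mul_comm] at hcs
  have hq : ⟪-z, x' - n₀⟫ = -⟪x', z⟫ := by
    rw [inner_neg_left, inner_sub_right, real_inner_comm n₀ z, hzn, sub_zero, real_inner_comm]
  rw [inner_zero_left, zero_sub, hq, neg_neg, le_inv_mul_iff₀ ht]
  linarith [hn₀.2 x hx.1]

end NormalCone

theorem stmt15_general {H : Type*} [NormedAddCommGroup H] [InnerProductSpace ℝ H]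
    [CompleteSpace H] (Θ : Set H) (hcv : Convex ℝ Θ)
    (u₀ : H) (hu₀ : u₀ ∈ Θ) (n₀ : H) (hn₀ : n₀ ∈ normalCone' Θ u₀)
    (hpoly : tangentCone' Θ u₀ ∩ perp n₀ = closure (radialCone Θ u₀ ∩ perp n₀)) :
    ∀ w, -w ∈ tangentCone' Θ u₀ ∩ perp n₀ →
      {v : H | regCoderivMem (normalCone' Θ) u₀ n₀ w v} =
        polarCone (tangentCone' Θ u₀ ∩ perp n₀) ∧
      regCoderivMem (normalCone' Θ) u₀ n₀ w 0 := by
  intro w hw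
  have hpolar : ∀ v ∈ polarCone (tangentCone' Θ u₀ ∩ perp n₀),
      regCoderivMem (normalCone' Θ) u₀ n₀ w v := by
    intro v hv
    rw [hpoly, ← Set.mem_neg, neg_closure] at hw
    refine regCoderivMem_of_mem_closure hw (polarCone_criticalCone_subset_closure hcv hu₀ n₀ hv) ?_
    rintro _ ⟨hzR, hzp⟩ _ ⟨ν, hν, _, hl, rfl⟩
    obtain ⟨l, rfl⟩ := Submodule.mem_span_singleton.mp hl
    simpa using (regCoderivMem_normalCone'_neg hn₀ hzR hzp).add
      (regCoderivMem_normalCone'_zero hn₀ hν l)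
  refine ⟨Set.ext fun v => ⟨fun hv => ?_, hpolar v⟩, hpolar 0 fun _ _ => by simp⟩
  rw [hpoly, polarCone_closure]
  rintro y ⟨hyR, hyp⟩
  exact inner_nonpos_of_regCoderivMem hv <|
    (eventually_add_smul_mem_of_mem_radialCone hcv hu₀ hyR).mono fun _ hs =>
      mem_normalCone'_add_smul hn₀ hyp hs

theorem stmt15 {H : Type*} [NormedAddCommGroup H] [InnerProductSpace ℝ H]
    [CompleteSpace H] (Θ : Set H) (hcl : IsClosed Θ) (hcv : Convex ℝ Θ)
    (u₀ : H) (hu₀ : u₀ ∈ Θ) (n₀ : H) (hn₀ : n₀ ∈ normalCone' Θ u₀)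
    (hpoly : tangentCone' Θ u₀ ∩ perp n₀ = closure (radialCone Θ u₀ ∩ perp n₀)) :
    ∀ w, -w ∈ tangentCone' Θ u₀ ∩ perp n₀ →
      {v : H | regCoderivMem (normalCone' Θ) u₀ n₀ w v} =
        polarCone (tangentCone' Θ u₀ ∩ perp n₀) ∧
      regCoderivMem (normalCone' Θ) u₀ n₀ w 0 :=
  stmt15_general Θ hcv u₀ hu₀ n₀ hn₀ hpoly
end

section
/- Let H be a Hilbert space, Θ ⊂ H closed convex, and (ū,û*) in the graph of the normal cone mapping N_Θ. Then the weak sequential outer limit C_{w}(ū,û*) of the critical cones C(u,u*) = T(u;Θ) ∩ {u*}^⊥ along graph-convergent sequences (uₙ,uₙ*) → (ū,û*) satisfies C_w(ū,û*) ⊂ cl[ T(ū;Θ) − T(ū;Θ) ] ∩ {û*}^⊥. -/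
open RealInnerProductSpace

open Filter

/-- Weak (sequential) convergence in an inner product space. -/
def WeakConv {H : Type*} [NormedAddCommGroup H] [InnerProductSpace ℝ H]
    (u : ℕ → H) (x : H) : Prop :=
  ∀ y : H, Tendsto (fun n => ⟪u n, y⟫) atTop (nhds ⟪x, y⟫)

/-! Since `(w - u) / t = (w - u₀) / t - (u - u₀) / t`, every tangent cone `T(u; Θ)` with
`u ∈ Θ` lies in the closed convex set `cl (T(u₀; Θ) - T(u₀; Θ))`; closed convex sets are weakly
sequentially closed (Hahn–Banach and Riesz), so the weak limit `v` stays there. Weakly convergent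
sequences are bounded (Banach–Steinhaus), hence `⟪wₙ, uₙ*⟫ = 0` passes to the limit
`⟪v, û*⟫ = 0`. -/

open scoped Pointwise Topology

section
variable {H : Type*} [NormedAddCommGroup H] [InnerProductSpace ℝ H]

theorem convex_radialCone {Θ : Set H} (hΘ : Convex ℝ Θ) (u₀ : H) :
    Convex ℝ (radialCone Θ u₀) := by
  have hΘ' : Convex ℝ ((· - u₀) '' Θ) := by
    simpa only [sub_eq_add_neg, add_comm] using hΘ.translate (-u₀)
  convert (ConvexCone.hull ℝ ((· - u₀) '' Θ)).convex
  ext v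
  simp only [radialCone, Set.mem_ofPred_eq, SetLike.mem_coe, ConvexCone.mem_hull_of_convex hΘ',
    Set.mem_smul_set, Set.exists_mem_image]
  constructor
  · rintro ⟨t, ht, w, hw, rfl⟩
    exact ⟨t⁻¹, inv_pos.2 ht, w, hw, rfl⟩
  · rintro ⟨r, hr, w, hw, rfl⟩
    exact ⟨r⁻¹, inv_pos.2 hr, w, hw, by rw [inv_inv]⟩

theorem convex_tangentCone' {Θ : Set H} (hΘ : Convex ℝ Θ) (u₀ : H) :
    Convex ℝ (tangentCone' Θ u₀) :=
  (convex_radialCone hΘ u₀).closure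

theorem radialCone_subset_sub {Θ : Set H} {u : H} (hu : u ∈ Θ) (u₀ : H) :
    radialCone Θ u ⊆ radialCone Θ u₀ - radialCone Θ u₀ := by
  rintro _ ⟨t, ht, w, hw, rfl⟩
  exact ⟨_, ⟨t, ht, w, hw, rfl⟩, _, ⟨t, ht, u, hu, rfl⟩,
    by simp only [← smul_sub, sub_sub_sub_cancel_right]⟩

theorem tangentCone'_subset_closure_sub {Θ : Set H} {u : H} (hu : u ∈ Θ) (u₀ : H) :
    tangentCone' Θ u ⊆ closure (tangentCone' Θ u₀ - tangentCone' Θ u₀) :=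
  closure_mono ((radialCone_subset_sub hu u₀).trans
    (Set.sub_subset_sub subset_closure subset_closure))

namespace WeakConv

variable [CompleteSpace H] {w : ℕ → H} {v : H}

theorem exists_norm_le (h : WeakConv w v) : ∃ C, ∀ n, ‖w n‖ ≤ C := by
  obtain ⟨C, hC⟩ := banach_steinhaus (g := fun n => innerSL ℝ (w n)) fun y => by
    obtain ⟨C, hC⟩ := (h y).norm.bddAbove_range
    exact ⟨C, fun n => hC ⟨n, rfl⟩⟩
  exact ⟨C, fun n => innerSL_apply_norm ℝ (w n) ▸ hC n⟩

theorem tendsto_inner (h : WeakConv w v) {u : ℕ → H} {x : H} (hu : Tendsto u atTop (𝓝 x)) :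
    Tendsto (fun n => ⟪w n, u n⟫) atTop (𝓝 ⟪v, x⟫) := by
  obtain ⟨C, hC⟩ := h.exists_norm_le
  have hsmall : Tendsto (fun n => ⟪w n, u n - x⟫) atTop (𝓝 0) := by
    refine squeeze_zero_norm (fun n => ?_)
      (by simpa using (tendsto_iff_norm_sub_tendsto_zero.1 hu).const_mul C)
    exact (norm_inner_le_norm _ _).trans (mul_le_mul_of_nonneg_right (hC n) (norm_nonneg _))
  simpa [inner_sub_right] using hsmall.add (h x)

theorem mem_of_convex_of_isClosed {s : Set H} (hs : Convex ℝ s) (hsc : IsClosed s)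
    (hw : ∀ n, w n ∈ s) (h : WeakConv w v) : v ∈ s := by
  by_contra hv
  obtain ⟨f, c, hfs, hfv⟩ := geometric_hahn_banach_closed_point hs hsc hv
  have hf : Tendsto (fun n => f (w n)) atTop (𝓝 (f v)) := by
    simpa only [← InnerProductSpace.toDual_symm_apply, real_inner_comm]
      using h ((InnerProductSpace.toDual ℝ H).symm f)
  obtain ⟨n, hn⟩ := (hf.eventually (eventually_gt_nhds hfv)).exists
  exact (hfs (w n) (hw n)).not_gt hn

end WeakConv

end

theorem stmt17_general {H : Type*} [NormedAddCommGroup H] [InnerProductSpace ℝ H]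
    [CompleteSpace H] (Θ : Set H) (hcv : Convex ℝ Θ)
    (u₀ : H) (n₀ : H)
    (v : H)
    (hv : ∃ (u : ℕ → H) (u' : ℕ → H) (w : ℕ → H),
      (∀ n, u' n ∈ normalCone' Θ (u n)) ∧
      Tendsto u atTop (nhds u₀) ∧ Tendsto u' atTop (nhds n₀) ∧
      (∀ n, w n ∈ tangentCone' Θ (u n) ∩ perp (u' n)) ∧
      WeakConv w v) :
    v ∈ closure {d : H | ∃ a ∈ tangentCone' Θ u₀, ∃ b ∈ tangentCone' Θ u₀, d = a - b}
        ∩ perp n₀ := by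
  obtain ⟨u, u', w, hu'N, -, hu'n₀, hw, hwv⟩ := hv
  have hdiff : {d : H | ∃ a ∈ tangentCone' Θ u₀, ∃ b ∈ tangentCone' Θ u₀, d = a - b} =
      tangentCone' Θ u₀ - tangentCone' Θ u₀ := by
    ext; simp only [Set.mem_ofPred_eq, Set.mem_sub, eq_comm]
  have hT : Convex ℝ (tangentCone' Θ u₀) := convex_tangentCone' hcv u₀
  have hwT : ∀ n, w n ∈ closure (tangentCone' Θ u₀ - tangentCone' Θ u₀) := fun n =>
    tangentCone'_subset_closure_sub (hu'N n).1 u₀ (hw n).1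
  refine ⟨hdiff ▸ hwv.mem_of_convex_of_isClosed (hT.sub hT).closure isClosed_closure hwT, ?_⟩
  have horth : ∀ n, ⟪w n, u' n⟫ = 0 := fun n => real_inner_comm (w n) (u' n) ▸ (hw n).2
  have hlim : ⟪v, n₀⟫ = 0 :=
    tendsto_nhds_unique (hwv.tendsto_inner hu'n₀) (by simp only [horth, tendsto_const_nhds])
  rwa [perp, Set.mem_ofPred_eq, real_inner_comm]

theorem stmt17 {H : Type*} [NormedAddCommGroup H] [InnerProductSpace ℝ H]
    [CompleteSpace H] (Θ : Set H) (hcl : IsClosed Θ) (hcv : Convex ℝ Θ)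
    (u₀ : H) (hu₀ : u₀ ∈ Θ) (n₀ : H) (hn₀ : n₀ ∈ normalCone' Θ u₀)
    (v : H)
    (hv : ∃ (u : ℕ → H) (u' : ℕ → H) (w : ℕ → H),
      (∀ n, u' n ∈ normalCone' Θ (u n)) ∧
      Tendsto u atTop (nhds u₀) ∧ Tendsto u' atTop (nhds n₀) ∧
      (∀ n, w n ∈ tangentCone' Θ (u n) ∩ perp (u' n)) ∧
      WeakConv w v) :
    v ∈ closure {d : H | ∃ a ∈ tangentCone' Θ u₀, ∃ b ∈ tangentCone' Θ u₀, d = a - b}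
        ∩ perp n₀ :=
  stmt17_general Θ hcv u₀ n₀ v hv
end
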